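/- arXiv:2112.04097 — 3 statements merged into one kernel-verified Lean document; each statement's English description precedes it below -/
import Mathlib

section
/- For any finite digraph D, the complementarity spectrum of its adjacency matrix equals the set of spectral radii of the induced strongly connected subdigraphs of D. -/
open Matrix
open scoped Classical

noncomputable section

/-- Adjacency matrix of a digraph given by an arc relation `E`. -/
def adjMat {V : Type*} (E : V → V → Prop) : Matrix V V ℝ :=
  Matrix.of fun i j => if E i j then (1 : ℝ) else 0

/-- Spectral radius of a real square matrix: the largest modulus of a (complex) eigenvalue. -/
def matSpecRad {n : Type*} [Fintype n] (A : Matrix n n ℝ) : ℝ :=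
  sSup {r : ℝ | ∃ μ ∈ spectrum ℂ (A.map (fun x => (x : ℂ))), r = ‖μ‖}

/-- Spectral radius of a digraph. -/
def rho {V : Type*} [Fintype V] (E : V → V → Prop) : ℝ :=
  matSpecRad (adjMat E)

/-- The complementarity spectrum of a real square matrix. -/
def compSpec {n : Type*} [Fintype n] (A : Matrix n n ℝ) : Set ℝ :=
  {lam | ∃ x : n → ℝ, x ≠ 0 ∧ 0 ≤ x ∧ 0 ≤ A.mulVec x - lam • x ∧
    x ⬝ᵥ (A.mulVec x - lam • x) = 0}

/-- Reachability by directed paths. -/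
def Reach {V : Type*} (E : V → V → Prop) : V → V → Prop :=
  Relation.ReflTransGen E

/-- A digraph is strongly connected if every vertex reaches every other one. -/
def StronglyConnected {V : Type*} (E : V → V → Prop) : Prop :=
  ∀ u v, Reach E u v

/-- Induced subdigraph on a vertex subset `S`. -/
def induceRel {V : Type*} (E : V → V → Prop) (S : Set V) : S → S → Prop :=
  fun a b => E a.1 b.1

/-- Spectral radius of the induced subdigraph on `S`. -/
def specRadOn {V : Type*} [Fintype V] (E : V → V → Prop) (S : Set V) : ℝ :=
  @rho S (Set.Finite.fintype S.toFinite) (induceRel E S)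

/-- Complementarity spectrum of the induced subdigraph on `S`. -/
def compSpecOn {V : Type*} [Fintype V] (E : V → V → Prop) (S : Set V) : Set ℝ :=
  @compSpec S (Set.Finite.fintype S.toFinite) (adjMat (induceRel E S))

/-- Isomorphism of digraphs. -/
def IsoDigraph {V W : Type*} (E : V → V → Prop) (F : W → W → Prop) : Prop :=
  ∃ e : V ≃ W, ∀ a b, E a b ↔ F (e a) (e b)

/-- The directed cycle on `n` vertices. -/
def cycleRel (n : ℕ) : ZMod n → ZMod n → Prop := fun i j => j = i + 1

/-- A digraph is a directed cycle if it is isomorphic to some `C⃗_n`, `n ≥ 2`. -/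
def IsCycleDigraph {V : Type*} (E : V → V → Prop) : Prop :=
  ∃ n : ℕ, 2 ≤ n ∧ IsoDigraph E (cycleRel n)

/-- A digraph is acyclic if it has no directed cycle. -/
def Acyclic {V : Type*} (E : V → V → Prop) : Prop :=
  ∀ v, ¬ Relation.TransGen E v v

/-- Strongly connected component of the vertex `v`. -/
def component {V : Type*} (E : V → V → Prop) (v : V) : Set V :=
  {u | Reach E u v ∧ Reach E v u}

/-- `D` has an `∞(r,s)`-subdigraph: two directed cycles of lengths `r` and `s`
sharing exactly one vertex, all of whose arcs are arcs of `D`. -/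
def InftySub {V : Type*} (E : V → V → Prop) (r s : ℕ) : Prop :=
  ∃ (f : ZMod r → V) (g : ZMod s → V),
    Function.Injective f ∧ Function.Injective g ∧ f 0 = g 0 ∧
    Set.range f ∩ Set.range g = {f 0} ∧
    (∀ i, E (f i) (f (i + 1))) ∧ (∀ j, E (g j) (g (j + 1)))

/-- `D` has a `θ(a,b,c)`-subdigraph: three internally disjoint directed paths,
two from `v` to `w` (of lengths `a+1` and `b+1`) and one from `w` to `v`
(of length `c+1`), all of whose arcs are arcs of `D`. -/
def ThetaSub {V : Type*} (E : V → V → Prop) (a b c : ℕ) : Prop :=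
  ∃ (P : Fin (a + 2) → V) (Q : Fin (b + 2) → V) (R : Fin (c + 2) → V),
    Function.Injective P ∧ Function.Injective Q ∧ Function.Injective R ∧
    P 0 = Q 0 ∧ Q 0 = R (Fin.last (c + 1)) ∧
    P (Fin.last (a + 1)) = Q (Fin.last (b + 1)) ∧ Q (Fin.last (b + 1)) = R 0 ∧
    (∀ i j, P i = Q j → (i = 0 ∧ j = 0) ∨ (i = Fin.last (a + 1) ∧ j = Fin.last (b + 1))) ∧
    (∀ i j, P i = R j → (i = 0 ∧ j = Fin.last (c + 1)) ∨ (i = Fin.last (a + 1) ∧ j = 0)) ∧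
    (∀ i j, Q i = R j → (i = 0 ∧ j = Fin.last (c + 1)) ∨ (i = Fin.last (b + 1) ∧ j = 0)) ∧
    (∀ i : Fin (a + 1), E (P i.castSucc) (P i.succ)) ∧
    (∀ i : Fin (b + 1), E (Q i.castSucc) (Q i.succ)) ∧
    (∀ i : Fin (c + 1), E (R i.castSucc) (R i.succ))

/-- `D` is (isomorphic to) the `∞(r,s)` digraph: the coalescence of the directed
cycles `C⃗_r` and `C⃗_s` at one vertex, with no further vertices or arcs. -/
def IsInftyDigraph {V : Type*} (E : V → V → Prop) (r s : ℕ) : Prop :=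
  ∃ (f : ZMod r → V) (g : ZMod s → V),
    Function.Injective f ∧ Function.Injective g ∧ f 0 = g 0 ∧
    Set.range f ∩ Set.range g = {f 0} ∧
    Set.range f ∪ Set.range g = Set.univ ∧
    ∀ u v, E u v ↔ ((∃ i, u = f i ∧ v = f (i + 1)) ∨ (∃ j, u = g j ∧ v = g (j + 1)))

/-- `D` is (isomorphic to) the `θ(a,b,c)` digraph: three internally disjoint
directed paths, two from `v` to `w` and one from `w` to `v`, with no further
vertices or arcs. -/
def IsThetaDigraph {V : Type*} (E : V → V → Prop) (a b c : ℕ) : Prop :=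
  ∃ (P : Fin (a + 2) → V) (Q : Fin (b + 2) → V) (R : Fin (c + 2) → V),
    Function.Injective P ∧ Function.Injective Q ∧ Function.Injective R ∧
    P 0 = Q 0 ∧ Q 0 = R (Fin.last (c + 1)) ∧
    P (Fin.last (a + 1)) = Q (Fin.last (b + 1)) ∧ Q (Fin.last (b + 1)) = R 0 ∧
    (∀ i j, P i = Q j → (i = 0 ∧ j = 0) ∨ (i = Fin.last (a + 1) ∧ j = Fin.last (b + 1))) ∧
    (∀ i j, P i = R j → (i = 0 ∧ j = Fin.last (c + 1)) ∨ (i = Fin.last (a + 1) ∧ j = 0)) ∧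
    (∀ i j, Q i = R j → (i = 0 ∧ j = Fin.last (c + 1)) ∨ (i = Fin.last (b + 1) ∧ j = 0)) ∧
    Set.range P ∪ Set.range Q ∪ Set.range R = Set.univ ∧
    (∀ u v, E u v ↔
      ((∃ i : Fin (a + 1), u = P i.castSucc ∧ v = P i.succ) ∨
       (∃ i : Fin (b + 1), u = Q i.castSucc ∧ v = Q i.succ) ∨
       (∃ i : Fin (c + 1), u = R i.castSucc ∧ v = R i.succ)))

/-!
If `x` is a complementarity eigenvector for `λ`, then `A x = λ x` on the support `S` of `x`. A
terminal strong component `C` of `D[S]` sends no arc to `S \ C`, so `x` restricted to `C` is a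
positive eigenvector of `A(D[C])` for `λ`, and a nonnegative matrix with a positive eigenvector has
its eigenvalue as spectral radius.

Conversely, by Perron–Frobenius a strongly connected `D[S]` has a positive eigenvector for
`ρ(D[S])`: the maximiser `x` of the Collatz–Wielandt value `max {t | t x ≤ A x}` over the simplex
is one, since otherwise `(1 + A)^k x` would improve it. Extended by zero, this vector is a
complementarity eigenvector of `A(D)`, because `A(D) ≥ 0`.
-/

open Filter Topology

section NonnegMatrix

variable {n : Type*} [Fintype n]

theorem Matrix.mem_spectrum_iff_exists_mulVec_eq_smul {K : Type*} [Field K] [DecidableEq n]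
    {A : Matrix n n K} {μ : K} : μ ∈ spectrum K A ↔ ∃ v ≠ 0, A *ᵥ v = μ • v := by
  rw [← Matrix.spectrum_toLin', ← Module.End.hasEigenvalue_iff_mem_spectrum]
  refine ⟨fun h => ?_, fun ⟨v, hv, h⟩ => Module.End.hasEigenvalue_of_hasEigenvector ⟨?_, hv⟩⟩
  · obtain ⟨v, hv⟩ := h.exists_hasEigenvector
    exact ⟨v, hv.2, by simpa using hv.apply_eq_smul⟩
  · simpa [Module.End.mem_eigenspace_iff] using h

variable {B : Matrix n n ℝ}

theorem Matrix.mulVec_nonneg (hB : ∀ i j, 0 ≤ B i j) {v : n → ℝ} (hv : 0 ≤ v) : 0 ≤ B *ᵥ v :=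
  fun i => Finset.sum_nonneg fun j _ => mul_nonneg (hB i j) (hv j)

theorem norm_le_of_mulVec_eq_smul_of_pos (hB : ∀ i j, 0 ≤ B i j) {x : n → ℝ} (hx : ∀ i, 0 < x i)
    {r : ℝ} (hBx : B *ᵥ x = r • x) {μ : ℂ} (hμ : μ ∈ spectrum ℂ (B.map (fun a => (a : ℂ)))) :
    ‖μ‖ ≤ r := by
  obtain ⟨v, hv0, hv⟩ := Matrix.mem_spectrum_iff_exists_mulVec_eq_smul.1 hμ
  obtain ⟨j, hj⟩ := Function.ne_iff.1 hv0
  have : Nonempty n := ⟨j⟩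
  -- compare `v` with `x` at a coordinate where `‖v i‖ / x i` is largest
  obtain ⟨i, hi⟩ := Finite.exists_max fun k => ‖v k‖ / x k
  set t := ‖v i‖ / x i
  have hvt : ∀ k, ‖v k‖ ≤ t * x k := fun k => (div_le_iff₀ (hx k)).1 (hi k)
  have hvi : 0 < ‖v i‖ :=
    (div_pos_iff_of_pos_right (hx i)).1 ((div_pos (norm_pos_iff.2 hj) (hx j)).trans_le (hi j))
  have hti : t * x i = ‖v i‖ := div_mul_cancel₀ _ (hx i).ne'
  refine le_of_mul_le_mul_right ?_ hvi
  calc ‖μ‖ * ‖v i‖ = ‖∑ k, (B i k : ℂ) * v k‖ := by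
        rw [← norm_mul, ← smul_eq_mul, ← Pi.smul_apply, ← hv]; rfl
    _ ≤ ∑ k, B i k * ‖v k‖ := by
        refine (norm_sum_le _ _).trans_eq (Finset.sum_congr rfl fun k _ => ?_)
        rw [norm_mul, Complex.norm_of_nonneg (hB i k)]
    _ ≤ ∑ k, B i k * (t * x k) :=
        Finset.sum_le_sum fun k _ => mul_le_mul_of_nonneg_left (hvt k) (hB i k)
    _ = t * (B *ᵥ x) i := by
        rw [Matrix.mulVec, dotProduct, Finset.mul_sum]
        exact Finset.sum_congr rfl fun k _ => by ring
    _ = r * ‖v i‖ := by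
        rw [hBx, Pi.smul_apply, smul_eq_mul, ← hti]; ring

theorem matSpecRad_eq_of_mulVec_eq_smul_of_pos [Nonempty n] (hB : ∀ i j, 0 ≤ B i j)
    {x : n → ℝ} (hx : ∀ i, 0 < x i) {r : ℝ} (hBx : B *ᵥ x = r • x) : matSpecRad B = r := by
  have hr : (r : ℂ) ∈ spectrum ℂ (B.map (fun a => (a : ℂ))) := by
    refine Matrix.mem_spectrum_iff_exists_mulVec_eq_smul.2 ⟨(↑) ∘ x, ?_, ?_⟩
    · obtain ⟨i⟩ := ‹Nonempty n›
      exact Function.ne_iff.2 ⟨i, by simpa using (hx i).ne'⟩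
    · ext i
      exact (RingHom.map_mulVec Complex.ofRealHom B x i).symm.trans (by simp [hBx])
  have hr0 : 0 ≤ r := by
    simpa using (abs_nonneg r).trans (by simpa using norm_le_of_mulVec_eq_smul_of_pos hB hx hBx hr)
  refine IsGreatest.csSup_eq ⟨⟨r, hr, by simp [abs_of_nonneg hr0]⟩, ?_⟩
  rintro _ ⟨μ, hμ, rfl⟩
  exact norm_le_of_mulVec_eq_smul_of_pos hB hx hBx hμ

theorem one_add_pow_succ_mulVec (B : Matrix n n ℝ) (k : ℕ) (v : n → ℝ) :
    (1 + B) ^ (k + 1) *ᵥ v = (1 + B) ^ k *ᵥ v + B *ᵥ ((1 + B) ^ k *ᵥ v) := by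
  rw [pow_succ', ← Matrix.mulVec_mulVec, Matrix.add_mulVec, Matrix.one_mulVec]

theorem one_add_pow_mulVec_nonneg (hB : ∀ i j, 0 ≤ B i j) {v : n → ℝ} (hv : 0 ≤ v) (k : ℕ) :
    0 ≤ (1 + B) ^ k *ᵥ v := by
  induction k with
  | zero => simpa using hv
  | succ k ih => rw [one_add_pow_succ_mulVec]; exact add_nonneg ih (Matrix.mulVec_nonneg hB ih)

theorem monotone_one_add_pow_mulVec (hB : ∀ i j, 0 ≤ B i j) {v : n → ℝ} (hv : 0 ≤ v) :
    Monotone fun k => (1 + B) ^ k *ᵥ v :=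
  monotone_nat_of_le_succ fun k => by
    rw [one_add_pow_succ_mulVec]
    exact le_add_of_nonneg_right (Matrix.mulVec_nonneg hB (one_add_pow_mulVec_nonneg hB hv k))

theorem exists_pos_one_add_pow_mulVec_apply (hB : ∀ i j, 0 ≤ B i j) {v : n → ℝ} (hv : 0 ≤ v)
    {i j : n} (hij : Relation.ReflTransGen (fun a b => 0 < B a b) i j) (hj : 0 < v j) :
    ∃ k, 0 < ((1 + B) ^ k *ᵥ v) i := by
  induction hij using Relation.ReflTransGen.head_induction_on with
  | refl => exact ⟨0, by simpa using hj⟩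
  | head hac _ ih =>
    obtain ⟨k, hk⟩ := ih
    refine ⟨k + 1, ?_⟩
    have hw := one_add_pow_mulVec_nonneg hB hv k
    rw [one_add_pow_succ_mulVec, Pi.add_apply]
    refine add_pos_of_nonneg_of_pos (hw _) ((mul_pos hac hk).trans_le ?_)
    exact Finset.single_le_sum (f := fun c => B _ c * ((1 + B) ^ k *ᵥ v) c)
      (fun c _ => mul_nonneg (hB _ c) (hw c)) (Finset.mem_univ _)

theorem eventually_pos_one_add_pow_mulVec (hB : ∀ i j, 0 ≤ B i j)
    (hirr : ∀ i j, Relation.ReflTransGen (fun a b => 0 < B a b) i j)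
    {v : n → ℝ} (hv : 0 ≤ v) (hv0 : v ≠ 0) :
    ∀ᶠ k in atTop, ∀ i, 0 < ((1 + B) ^ k *ᵥ v) i := by
  obtain ⟨j, hj⟩ := Function.ne_iff.1 hv0
  refine eventually_all.2 fun i => ?_
  obtain ⟨k, hk⟩ :=
    exists_pos_one_add_pow_mulVec_apply hB hv (hirr i j) ((hv j).lt_of_ne' hj)
  exact eventually_atTop.2 ⟨k, fun l hl => hk.trans_le (monotone_one_add_pow_mulVec hB hv hl i)⟩

theorem exists_pos_smul_le {u : n → ℝ} (hu : ∀ i, 0 < u i) (w : n → ℝ) :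
    ∃ ε : ℝ, 0 < ε ∧ ε • w ≤ u := by
  have : ∀ᶠ ε in 𝓝[>] (0 : ℝ), 0 < ε ∧ ∀ i, ε * w i < u i := by
    refine (eventually_mem_nhdsWithin (s := Set.Ioi 0)).and
      (nhdsWithin_le_nhds (eventually_all.2 fun i => ?_))
    exact ((continuous_id.mul continuous_const).tendsto' 0 0 (by simp)).eventually
      (gt_mem_nhds (hu i))
  obtain ⟨ε, hε, h⟩ := this.exists
  exact ⟨ε, hε, fun i => (h i).le⟩

theorem le_sum_of_smul_le_mulVec (hB : ∀ i j, 0 ≤ B i j) {x : n → ℝ} (hx : x ∈ stdSimplex ℝ n)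
    {t : ℝ} (h : t • x ≤ B *ᵥ x) : t ≤ ∑ i, ∑ j, B i j :=
  calc t = ∑ i, t * x i := by rw [← Finset.mul_sum, hx.2, mul_one]
    _ ≤ ∑ i, ∑ j, B i j * x j := Finset.sum_le_sum fun i _ => h i
    _ ≤ ∑ i, ∑ j, B i j := Finset.sum_le_sum fun i _ => Finset.sum_le_sum fun j _ =>
        mul_le_of_le_one_right (hB i j) (mem_Icc_of_mem_stdSimplex hx j).2

theorem exists_mem_stdSimplex_smul_le_mulVec {w : n → ℝ} (hw : 0 ≤ w) (hw0 : 0 < ∑ i, w i)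
    {t : ℝ} (h : t • w ≤ B *ᵥ w) : ∃ y ∈ stdSimplex ℝ n, t • y ≤ B *ᵥ y := by
  refine ⟨(∑ i, w i)⁻¹ • w, ⟨fun i => ?_, ?_⟩, ?_⟩
  · exact smul_nonneg (inv_nonneg.2 hw0.le) (hw i)
  · simp [← Finset.mul_sum, inv_mul_cancel₀ hw0.ne']
  · rw [Matrix.mulVec_smul, smul_comm]
    exact smul_le_smul_of_nonneg_left h (inv_nonneg.2 hw0.le)

theorem exists_isGreatest_smul_le_mulVec [Nonempty n] (hB : ∀ i j, 0 ≤ B i j) :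
    ∃ r, IsGreatest {t : ℝ | ∃ y ∈ stdSimplex ℝ n, t • y ≤ B *ᵥ y} r := by
  set M := ∑ i, ∑ j, B i j
  set T : Set (ℝ × (n → ℝ)) := Set.Icc 0 M ×ˢ stdSimplex ℝ n ∩ {p | p.1 • p.2 ≤ B *ᵥ p.2}
  have hT : IsCompact T := ((isCompact_Icc.prod (isCompact_stdSimplex ℝ n)).inter_right
    (isClosed_le (by fun_prop) (by fun_prop)))
  obtain ⟨i⟩ := ‹Nonempty n›
  have hM : 0 ≤ M := Finset.sum_nonneg fun i _ => Finset.sum_nonneg fun j _ => hB i j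
  have hTne : T.Nonempty := ⟨(0, Pi.single i 1), ⟨⟨le_rfl, hM⟩, single_mem_stdSimplex ℝ i⟩,
    by simpa using Matrix.mulVec_nonneg hB (single_mem_stdSimplex ℝ i).1⟩
  obtain ⟨⟨r, x⟩, ⟨⟨⟨hr0, -⟩, hx⟩, hrx⟩, hmax⟩ :=
    hT.exists_isMaxOn hTne continuous_fst.continuousOn
  refine ⟨r, ⟨x, hx, hrx⟩, ?_⟩
  rintro t ⟨y, hy, hty⟩
  rcases lt_or_ge t 0 with ht | ht
  · exact ht.le.trans hr0
  · exact hmax (show (t, y) ∈ T from ⟨⟨⟨ht, le_sum_of_smul_le_mulVec hB hy hty⟩, hy⟩, hty⟩)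

theorem Matrix.pow_mulVec_eq_pow_smul {A : Matrix n n ℝ} {v : n → ℝ} {c : ℝ}
    (h : A *ᵥ v = c • v) (k : ℕ) : A ^ k *ᵥ v = c ^ k • v := by
  induction k with
  | zero => simp
  | succ k ih =>
    rw [pow_succ, ← Matrix.mulVec_mulVec, h, Matrix.mulVec_smul, ih, smul_smul, pow_succ']

theorem exists_pos_mulVec_eq_smul_of_irreducible [Nonempty n] (hB : ∀ i j, 0 ≤ B i j)
    (hirr : ∀ i j, Relation.ReflTransGen (fun a b => 0 < B a b) i j) :
    ∃ (r : ℝ) (x : n → ℝ), (∀ i, 0 < x i) ∧ B *ᵥ x = r • x := by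
  obtain ⟨r, ⟨x, hx, hrx⟩, hmax⟩ := exists_isGreatest_smul_le_mulVec hB
  have hx0 : x ≠ 0 := fun h => by simpa [h] using hx.2
  have hpos := eventually_pos_one_add_pow_mulVec hB hirr hx.1 hx0
  have heig : B *ᵥ x = r • x := by
    by_contra hne
    have hz : 0 ≤ B *ᵥ x - r • x := sub_nonneg.2 hrx
    obtain ⟨k, hxk, hzk⟩ :=
      (hpos.and (eventually_pos_one_add_pow_mulVec hB hirr hz (sub_ne_zero.2 hne))).exists
    -- `w` is positive with `B w - r w > 0`, so `r` is not the largest Collatz–Wielandt value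
    set w := (1 + B) ^ k *ᵥ x
    have hw : (1 + B) ^ k *ᵥ (B *ᵥ x - r • x) = B *ᵥ w - r • w := by
      rw [Matrix.mulVec_sub, Matrix.mulVec_mulVec,
        (((Commute.one_left B).add_left (Commute.refl B)).pow_left k).eq,
        ← Matrix.mulVec_mulVec, Matrix.mulVec_smul]
    obtain ⟨ε, hε, hεw⟩ := exists_pos_smul_le (hw ▸ hzk) w
    have hrε : r + ε ∈ {t : ℝ | ∃ y ∈ stdSimplex ℝ n, t • y ≤ B *ᵥ y} := by
      refine exists_mem_stdSimplex_smul_le_mulVec (fun i => (hxk i).le)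
        (Finset.sum_pos (fun i _ => hxk i) Finset.univ_nonempty) ?_
      rw [add_smul]
      exact le_sub_iff_add_le'.1 hεw
    linarith [hmax hrε]
  obtain ⟨k, hk⟩ := hpos.exists
  refine ⟨r, x, fun i => (hx.1 i).lt_of_ne' fun hi => ?_, heig⟩
  have hki := hk i
  rw [Matrix.pow_mulVec_eq_pow_smul (c := 1 + r) (by simp [Matrix.add_mulVec, heig, add_smul]),
    Pi.smul_apply, hi, smul_zero] at hki
  exact lt_irrefl 0 hki

end NonnegMatrix

section Complementarity

variable {n : Type*} [Fintype n]

theorem Matrix.submatrix_val_mulVec {A : Matrix n n ℝ} (S : Set n) [Fintype S] {x : n → ℝ}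
    (hx : ∀ i ∈ S, ∀ j ∉ S, A i j * x j = 0) :
    A.submatrix (↑) (↑) *ᵥ (fun j : S => x j) = fun i : S => (A *ᵥ x) i := by
  ext i
  simp only [Matrix.mulVec, dotProduct, Matrix.submatrix_apply]
  rw [← Finset.sum_subtype S.toFinset (fun _ => Set.mem_toFinset) (fun j => A i j * x j)]
  exact Finset.sum_subset (Finset.subset_univ _) fun j _ hj => hx i i.2 j (by simpa using hj)

theorem mulVec_apply_eq_of_complementarity {A : Matrix n n ℝ} {x : n → ℝ} {lam : ℝ} (hx : 0 ≤ x)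
    (hAx : 0 ≤ A *ᵥ x - lam • x) (hc : x ⬝ᵥ (A *ᵥ x - lam • x) = 0) {i : n} (hi : 0 < x i) :
    (A *ᵥ x) i = lam * x i := by
  have := (Finset.sum_eq_zero_iff_of_nonneg fun j _ => mul_nonneg (hx j) (hAx j)).1 hc i
    (Finset.mem_univ i)
  simpa [sub_eq_zero, hi.ne'] using this

theorem mem_compSpec_of_submatrix_mulVec_eq_smul {A : Matrix n n ℝ} (hA : ∀ i j, 0 ≤ A i j)
    (S : Set n) [Fintype S] {y : S → ℝ} (hy : 0 ≤ y) (hy0 : y ≠ 0) {r : ℝ}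
    (h : A.submatrix (↑) (↑) *ᵥ y = r • y) : r ∈ compSpec A := by
  set x := Function.extend Subtype.val y 0
  have hxS : ∀ i : S, x i = y i := Subtype.val_injective.extend_apply y 0
  have hxSc : ∀ i ∉ S, x i = 0 := fun i hi =>
    Function.extend_apply' _ _ _ fun ⟨j, hj⟩ => hi (hj ▸ j.2)
  have hAx : ∀ i : S, (A *ᵥ x) i = r * x i := by
    have := A.submatrix_val_mulVec S (x := x) fun i _ j hj => by rw [hxSc j hj, mul_zero]
    rw [show (fun j : S => x j) = y from funext hxS, h] at this
    intro i
    rw [← congrFun this i, hxS, Pi.smul_apply, smul_eq_mul]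
  have hslack : ∀ i, x i = 0 ∨ (A *ᵥ x - r • x) i = 0 := fun i => by
    by_cases hi : i ∈ S
    · exact .inr (by simp [hAx ⟨i, hi⟩])
    · exact .inl (hxSc i hi)
  have hx : 0 ≤ x := fun i => by
    by_cases hi : i ∈ S
    · exact (hxS ⟨i, hi⟩).symm ▸ hy _
    · exact (hxSc i hi).ge
  refine ⟨x, fun h0 => hy0 (funext fun i => by rw [← hxS, h0]; rfl), hx, fun i => ?_, ?_⟩
  · rcases hslack i with h | h
    · simpa [h] using Matrix.mulVec_nonneg hA hx i
    · exact h.ge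
  · exact Finset.sum_eq_zero fun i _ => mul_eq_zero.2 (hslack i)

end Complementarity

section Digraph

variable {V : Type*}

theorem Relation.ReflTransGen.exists_subtype {r : V → V → Prop} {C : Set V}
    (hC : ∀ a ∈ C, ∀ b, r a b → b ∈ C) {a b : V} (hab : Relation.ReflTransGen r a b)
    (ha : a ∈ C) :
    ∃ hb : b ∈ C, Relation.ReflTransGen (fun u v : C => r u v) ⟨a, ha⟩ ⟨b, hb⟩ := by
  induction hab with
  | refl => exact ⟨ha, .refl⟩
  | tail _ hbc ih =>
    obtain ⟨hb, h⟩ := ih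
    exact ⟨hC _ hb _ hbc, h.tail hbc⟩

theorem exists_terminal_stronglyConnected_subset [Finite V] (E : V → V → Prop) {S : Set V}
    (hS : S.Nonempty) :
    ∃ C ⊆ S, C.Nonempty ∧ StronglyConnected (induceRel E C) ∧
      ∀ u ∈ C, ∀ w ∈ S, E u w → w ∈ C := by
  let R : V → V → Prop := fun a b => E a b ∧ b ∈ S
  let reach : V → Set V := fun v => {u | Relation.ReflTransGen R v u}
  -- a vertex of `S` with inclusion-minimal reachable set is reached back from everything it reaches
  obtain ⟨v, hvS, hmin⟩ := S.toFinite.exists_minimalFor reach S hS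
  have hCS : reach v ⊆ S := fun u hu => by
    rcases hu.cases_tail with rfl | ⟨_, _, _, huS⟩
    exacts [hvS, huS]
  have hback : ∀ u ∈ reach v, Relation.ReflTransGen R u v := fun u hu =>
    hmin (hCS hu) (fun w hw => hu.trans hw) Relation.ReflTransGen.refl
  refine ⟨reach v, hCS, ⟨v, .refl⟩, fun ⟨a, ha⟩ ⟨b, hb⟩ => ?_,
    fun u hu w hw huw => hu.tail ⟨huw, hw⟩⟩
  obtain ⟨_, h⟩ := ((hback a ha).trans hb).exists_subtype (fun _ ha _ hab => ha.tail hab) ha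
  exact Relation.ReflTransGen.mono (p := induceRel E (reach v)) (fun _ _ h => h.1) _ _ h

theorem adjMat_nonneg (E : V → V → Prop) (i j : V) : 0 ≤ adjMat E i j := by
  simp only [adjMat, Matrix.of_apply]
  split_ifs <;> norm_num

theorem adjMat_pos_iff {E : V → V → Prop} {i j : V} : 0 < adjMat E i j ↔ E i j := by
  simp only [adjMat, Matrix.of_apply]
  split_ifs with h <;> simp [h]

theorem adjMat_induceRel (E : V → V → Prop) (S : Set V) :
    adjMat (induceRel E S) = (adjMat E).submatrix (↑) (↑) :=
  rfl

theorem specRadOn_eq_matSpecRad [Fintype V] (E : V → V → Prop) (S : Set V) [Fintype S] :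
    specRadOn E S = matSpecRad (adjMat (induceRel E S)) := by
  unfold specRadOn rho
  congr!

variable [Fintype V] {E : V → V → Prop}

theorem exists_specRadOn_eq_of_mem_compSpec {lam : ℝ} (h : lam ∈ compSpec (adjMat E)) :
    ∃ S : Set V, S.Nonempty ∧ StronglyConnected (induceRel E S) ∧ lam = specRadOn E S := by
  obtain ⟨x, hx0, hx, hAx, hc⟩ := h
  obtain ⟨j, hj⟩ := Function.ne_iff.1 hx0
  -- `x` is a positive eigenvector on a terminal strong component `C` of its support
  obtain ⟨C, hCS, hC, hCsc, hCclosed⟩ :=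
    exists_terminal_stronglyConnected_subset E (S := {i | 0 < x i}) ⟨j, (hx j).lt_of_ne' hj⟩
  refine ⟨C, hC, hCsc, ?_⟩
  have : Nonempty C := hC.to_subtype
  have heig : adjMat (induceRel E C) *ᵥ (fun i : C => x i) = lam • fun i : C => x i := by
    rw [adjMat_induceRel, Matrix.submatrix_val_mulVec]
    · ext i
      exact mulVec_apply_eq_of_complementarity hx hAx hc (hCS i.2)
    · intro i hi k hk
      by_cases hik : E i k
      · have hxk : x k = 0 :=
          le_antisymm (not_lt.1 fun hk' => hk (hCclosed i hi k hk' hik)) (hx k)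
        rw [hxk, mul_zero]
      · simp [adjMat, hik]
  rw [specRadOn_eq_matSpecRad, matSpecRad_eq_of_mulVec_eq_smul_of_pos (B := adjMat (induceRel E C))
    (adjMat_nonneg _) (fun i => hCS i.2) heig]

theorem specRadOn_mem_compSpec {S : Set V} (hS : S.Nonempty)
    (hSC : StronglyConnected (induceRel E S)) : specRadOn E S ∈ compSpec (adjMat E) := by
  have : Nonempty S := hS.to_subtype
  obtain ⟨r, y, hy, hyr⟩ := exists_pos_mulVec_eq_smul_of_irreducible
    (B := adjMat (induceRel E S)) (adjMat_nonneg _) fun i j =>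
      Relation.ReflTransGen.mono (fun _ _ => adjMat_pos_iff.2) _ _ (hSC i j)
  rw [specRadOn_eq_matSpecRad, matSpecRad_eq_of_mulVec_eq_smul_of_pos (adjMat_nonneg _) hy hyr]
  rw [adjMat_induceRel] at hyr
  exact mem_compSpec_of_submatrix_mulVec_eq_smul (adjMat_nonneg E) S (fun i => (hy i).le)
    (Function.ne_iff.2 ⟨Classical.arbitrary S, (hy _).ne'⟩) hyr

end Digraph

/-- the complementarity spectrum of a digraph is the set of spectral
radii of its induced strongly connected subdigraphs. -/
theorem stmt3 {V : Type*} [Fintype V] (E : V → V → Prop) :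
    compSpec (adjMat E) =
      {r : ℝ | ∃ S : Set V, S.Nonempty ∧ StronglyConnected (induceRel E S) ∧
        r = specRadOn E S} := by
  ext lam
  refine ⟨exists_specRadOn_eq_of_mem_compSpec, ?_⟩
  rintro ⟨S, hS, hSC, rfl⟩
  exact specRadOn_mem_compSpec hS hSC
end
end

section
/- If a finite digraph D contains at least one directed cycle, then 1 is a complementarity eigenvalue of D. -/
open Matrix
open scoped Classical

noncomputable section

/-! A shortest closed walk of `D` has no chord, since a chord would close a strictly shorter walk;
so every vertex on it has exactly one out-neighbour on it. The indicator vector `x` of its vertex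
set then satisfies `A x = x` on the walk, while off the walk `x = 0 ≤ A x`. -/

-- For `n = 0` this is a bi-infinite walk, as `ZMod 0 = ℤ`.
def IsClosedWalk {V : Type*} (E : V → V → Prop) {n : ℕ} (g : ZMod n → V) : Prop :=
  ∀ i, E (g i) (g (i + 1))

section ClosedWalk

variable {V : Type*} {E : V → V → Prop}

lemma exists_path_of_transGen {u v : V} (h : Relation.TransGen E u v) :
    ∃ n, 0 < n ∧ ∃ p : ℕ → V, p 0 = u ∧ p n = v ∧ ∀ j < n, E (p j) (p (j + 1)) := by
  induction h with
  | @single w huv =>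
    exact ⟨1, one_pos, fun j => if j = 0 then u else w, rfl, rfl, fun j hj => by
      obtain rfl : j = 0 := by omega
      exact huv⟩
  | @tail w x _ hwx ih =>
    obtain ⟨n, hn, p, hp0, hpn, hp⟩ := ih
    refine ⟨n + 1, n.succ_pos, fun j => if j ≤ n then p j else x, by simp [hp0], by simp,
      fun j hj => ?_⟩
    rcases Nat.lt_or_ge j n with hjn | hjn
    · simpa [hjn.le, Nat.succ_le_of_lt hjn] using hp j hjn
    · obtain rfl : j = n := by omega
      simpa [hpn] using hwx

lemma isClosedWalk_of_path {m : ℕ} [NeZero m] (p : ℕ → V)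
    (hstep : ∀ j, j + 1 < m → E (p j) (p (j + 1))) (hclose : E (p (m - 1)) (p 0)) :
    IsClosedWalk E fun i : ZMod m => p i.val := by
  intro i
  have hi := ZMod.val_lt i
  show E (p i.val) (p (i + 1).val)
  rw [ZMod.val_add, ZMod.val_one_eq_one_mod, Nat.add_mod_mod]
  rcases Nat.lt_or_ge (i.val + 1) m with hlt | hge
  · rw [Nat.mod_eq_of_lt hlt]
    exact hstep _ hlt
  · obtain hlast : i.val + 1 = m := by omega
    rw [hlast, Nat.mod_self, show i.val = m - 1 by omega]
    exact hclose

lemma exists_isClosedWalk_of_transGen {v : V} (h : Relation.TransGen E v v) :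
    ∃ n, 0 < n ∧ ∃ g : ZMod n → V, IsClosedWalk E g := by
  obtain ⟨n, hn, p, hp0, hpn, hp⟩ := exists_path_of_transGen h
  have : NeZero n := ⟨hn.ne'⟩
  refine ⟨n, hn, _, isClosedWalk_of_path p (fun j hj => hp j (by omega)) ?_⟩
  simpa [Nat.sub_add_cancel hn, hpn, hp0] using hp (n - 1) (by omega)

/-- A chord `g a → g b` of a closed walk, together with the arc of the walk from `g b` round to
`g a`, forms a strictly shorter closed walk. -/
lemma IsClosedWalk.exists_shorter_of_chord {k : ℕ} [NeZero k] {g : ZMod k → V}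
    (hg : IsClosedWalk E g) {a b : ZMod k} (hab : E (g a) (g b)) (hne : b ≠ a + 1) :
    ∃ m, 0 < m ∧ m < k ∧ ∃ g' : ZMod m → V, IsClosedWalk E g' := by
  set m := (a - b).val + 1
  have hmk : m < k := by
    refine lt_of_le_of_ne (ZMod.val_lt (a - b)) fun hm => hne ?_
    have hab' : a - b = -1 := by
      rw [← ZMod.natCast_zmod_val (a - b), show (a - b).val = k - 1 by omega,
        Nat.cast_pred (NeZero.pos k), ZMod.natCast_self, zero_sub]
    linear_combination -hab'
  refine ⟨m, Nat.succ_pos _, hmk, _, isClosedWalk_of_path (fun j => g (b + j)) (fun j _ => ?_) ?_⟩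
  · simpa [add_assoc] using hg (b + j)
  · simpa [m] using hab

lemma exists_chordless_isClosedWalk_of_transGen {v : V} (h : Relation.TransGen E v v) :
    ∃ k, ∃ g : ZMod k → V, IsClosedWalk E g ∧ ∀ a b, E (g a) (g b) → b = a + 1 := by
  have hex := exists_isClosedWalk_of_transGen h
  obtain ⟨hpos, g, hg⟩ := Nat.find_spec hex
  have : NeZero (Nat.find hex) := ⟨hpos.ne'⟩
  refine ⟨Nat.find hex, g, hg, fun a b hab => by_contra fun hne => ?_⟩
  obtain ⟨m, hm, hmk, hm'⟩ := hg.exists_shorter_of_chord hab hne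
  exact Nat.find_min hex hmk ⟨hm, hm'⟩

end ClosedWalk

lemma adjMat_mulVec_apply {V : Type*} [Fintype V] (E : V → V → Prop) (x : V → ℝ) (v : V) :
    (adjMat E *ᵥ x) v = ∑ u with E v u, x u := by
  simp [mulVec, dotProduct, adjMat, Finset.sum_filter]

theorem one_mem_compSpec_of_existsUnique {V : Type*} [Fintype V] (E : V → V → Prop)
    {S : Set V} (hS : S.Nonempty) (h : ∀ v ∈ S, ∃! u, u ∈ S ∧ E v u) :
    (1 : ℝ) ∈ compSpec (adjMat E) := by
  set x : V → ℝ := S.indicator 1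
  have hx_nonneg : 0 ≤ x := Set.indicator_nonneg fun _ _ => zero_le_one
  have hAx_nonneg (v : V) : 0 ≤ (adjMat E *ᵥ x) v := by
    rw [adjMat_mulVec_apply]
    exact Finset.sum_nonneg fun u _ => hx_nonneg u
  have hAx_eq_one (v : V) (hv : v ∈ S) : (adjMat E *ᵥ x) v = 1 := by
    obtain ⟨u, ⟨huS, hvu⟩, huniq⟩ := h v hv
    rw [adjMat_mulVec_apply, Finset.sum_eq_single_of_mem u (by simp [hvu])]
    · simp [x, huS]
    · intro w hw hwu
      exact Set.indicator_of_notMem (fun hwS => hwu (huniq w ⟨hwS, (by simpa using hw)⟩)) _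
  have hcompl (v : V) : 0 ≤ (adjMat E *ᵥ x - (1 : ℝ) • x) v ∧
      x v * (adjMat E *ᵥ x - (1 : ℝ) • x) v = 0 := by
    by_cases hv : v ∈ S
    · simp [hAx_eq_one v hv, x, hv]
    · simpa [x, hv] using hAx_nonneg v
  obtain ⟨v₀, hv₀⟩ := hS
  refine ⟨x, fun hx => ?_, hx_nonneg, fun v => (hcompl v).1,
    Finset.sum_eq_zero fun v _ => (hcompl v).2⟩
  simpa [x, hv₀] using congr_fun hx v₀

/-- if `D` contains a directed cycle then `1` is a complementarity
eigenvalue of `D`. -/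
theorem stmt9 {V : Type*} [Fintype V] (E : V → V → Prop)
    (h : ∃ v, Relation.TransGen E v v) :
    (1 : ℝ) ∈ compSpec (adjMat E) := by
  obtain ⟨v, hv⟩ := h
  obtain ⟨k, g, hg, hchordless⟩ := exists_chordless_isClosedWalk_of_transGen hv
  refine one_mem_compSpec_of_existsUnique E (Set.range_nonempty g) ?_
  rintro _ ⟨j, rfl⟩
  refine ⟨g (j + 1), ⟨⟨j + 1, rfl⟩, hg j⟩, ?_⟩
  rintro _ ⟨⟨b, rfl⟩, hjb⟩
  rw [hchordless j b hjb]
end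
end

section
/- If D is a strongly connected finite digraph that is not a directed cycle and has at least one arc, then D contains as a subdigraph either an ∞-digraph (two directed cycles sharing exactly one vertex) or a θ-digraph (a directed cycle together with a nontrivial directed path joining two distinct vertices of the cycle, internally disjoint from the cycle). -/
open Matrix
open scoped Classical

noncomputable section

/-- `D` contains some `∞`-digraph as a subdigraph. -/
def HasInftySubdigraph {V : Type*} (E : V → V → Prop) : Prop :=
  ∃ r s : ℕ, 2 ≤ r ∧ 2 ≤ s ∧ InftySub E r s

/-- `D` contains some `θ`-digraph as a subdigraph: a directed cycle together with a
nontrivial directed path joining two distinct vertices of the cycle, internally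
disjoint from the cycle, none of whose arcs is an arc of the cycle. -/
def HasThetaSubdigraph {V : Type*} (E : V → V → Prop) : Prop :=
  ∃ (n m : ℕ), 2 ≤ n ∧ 1 ≤ m ∧ ∃ (f : ZMod n → V) (p : Fin (m + 1) → V),
    Function.Injective f ∧ Function.Injective p ∧
    (∀ i, E (f i) (f (i + 1))) ∧
    (∀ i : Fin m, E (p i.castSucc) (p i.succ)) ∧
    p 0 ≠ p (Fin.last m) ∧ (∃ i, f i = p 0) ∧ (∃ j, f j = p (Fin.last m)) ∧
    (∀ k : Fin (m + 1), k ≠ 0 → k ≠ Fin.last m → p k ∉ Set.range f) ∧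
    (∀ i : Fin m, ¬ ∃ j : ZMod n, f j = p i.castSucc ∧ f (j + 1) = p i.succ)

/-!
Closing a shortest path along an arc gives a directed cycle `C`. If every arc leaving a vertex
of `C` is an arc of `C`, the vertex set of `C` is closed under arcs, so by strong connectivity
`D = C`. Otherwise some `v ∈ C` has an arc `v → b` that is not an arc of `C`, and a shortest path
from `b` back to `C` either returns to `v`, giving an `∞`-digraph together with `C`, or ends at
another vertex of `C`, giving a `θ`-digraph.

Shortest paths are obtained by descending the distance to the target set: the distance drops by
one at every step, which makes them injective and keeps them off the target until the end.
-/

namespace ArcRelation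

variable {V : Type*} (E : V → V → Prop)

def IsWalk {n : ℕ} (p : Fin (n + 1) → V) : Prop :=
  ∀ i : Fin n, E (p i.castSucc) (p i.succ)

-- `ZMod (n + 1)` is definitionally `Fin (n + 1)`, so a walk `Fin (n + 1) → V` can itself be
-- a cycle; only the `+ 1` differs, wrapping around at `Fin.last n`.
def IsDirCycle {m : ℕ} (c : ZMod m → V) : Prop :=
  Function.Injective c ∧ ∀ i, E (c i) (c (i + 1))

def ReachIn (T : V → Prop) : ℕ → V → Prop
  | 0, x => T x
  | n + 1, x => ∃ y, E x y ∧ ReachIn T n y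

def IsDistTo (T : V → Prop) (n : ℕ) (x : V) : Prop :=
  ReachIn E T n x ∧ ∀ m < n, ¬ ReachIn E T m x

variable {E}

lemma IsWalk.cons {n : ℕ} {p : Fin (n + 1) → V} {x : V} (hp : IsWalk E p) (hx : E x (p 0)) :
    IsWalk E (Fin.cons x p : Fin (n + 2) → V) := by
  intro i
  cases i using Fin.cases with
  | zero => exact hx
  | succ i => simpa only [← Fin.succ_castSucc, Fin.cons_succ] using hp i

lemma IsWalk.isDirCycle {n : ℕ} {p : Fin (n + 1) → V} (hp : IsWalk E p)
    (hinj : Function.Injective p) (hclose : E (p (Fin.last n)) (p 0)) :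
    IsDirCycle E (m := n + 1) p := by
  refine ⟨hinj, fun i => ?_⟩
  cases i using Fin.lastCases with
  | last =>
    convert hclose using 2
    exact congrArg p (Fin.last_add_one n)
  | cast i =>
    convert hp i using 2
    exact congrArg p Fin.coeSucc_eq_succ

lemma IsDirCycle.rotate {m : ℕ} {c : ZMod m → V} (hc : IsDirCycle E c) (i : ZMod m) :
    IsDirCycle E (fun j => c (j + i)) :=
  ⟨hc.1.comp (add_left_injective i), fun j => by simpa only [add_right_comm] using hc.2 (j + i)⟩

lemma reachIn_of_reach {T : V → Prop} {u t : V} (h : Reach E u t) (ht : T t) :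
    ∃ n, ReachIn E T n u := by
  induction h using Relation.ReflTransGen.head_induction_on with
  | refl => exact ⟨0, ht⟩
  | head hac _ ih =>
    obtain ⟨n, hn⟩ := ih
    exact ⟨n + 1, _, hac, hn⟩

lemma IsDistTo.unique {T : V → Prop} {m n : ℕ} {x : V} (hm : IsDistTo E T m x)
    (hn : IsDistTo E T n x) : m = n :=
  le_antisymm (not_lt.1 fun h => hm.2 n h hn.1) (not_lt.1 fun h => hn.2 m h hm.1)

lemma IsDistTo.exists_walk {T : V → Prop} {n : ℕ} {u : V} (hu : IsDistTo E T n u) :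
    ∃ p : Fin (n + 1) → V, p 0 = u ∧ IsWalk E p ∧
      ∀ k : Fin (n + 1), IsDistTo E T (n - k) (p k) := by
  induction n generalizing u with
  | zero => exact ⟨fun _ => u, rfl, fun i => i.elim0, fun k => by rwa [Nat.zero_sub]⟩
  | succ n ih =>
    obtain ⟨y, huy, hy⟩ := hu.1
    have hyd : IsDistTo E T n y :=
      ⟨hy, fun m hm hym => hu.2 (m + 1) (by omega) ⟨y, huy, hym⟩⟩
    obtain ⟨p, hp0, hp, hpd⟩ := ih hyd
    refine ⟨Fin.cons u p, rfl, hp.cons (hp0 ▸ huy), fun k => ?_⟩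
    cases k using Fin.cases with
    | zero => exact hu
    | succ k => simpa using hpd k

lemma exists_shortest_walk {T : V → Prop} {u : V} (h : ∃ t, T t ∧ Reach E u t) :
    ∃ (n : ℕ) (p : Fin (n + 1) → V), p 0 = u ∧ IsWalk E p ∧ Function.Injective p ∧
      T (p (Fin.last n)) ∧ ∀ k : Fin n, ¬ T (p k.castSucc) := by
  obtain ⟨t, ht, hut⟩ := h
  have hex := reachIn_of_reach hut ht
  obtain ⟨n, hdist⟩ : ∃ n, IsDistTo E T n u :=
    ⟨Nat.find hex, Nat.find_spec hex, fun m hm => Nat.find_min hex hm⟩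
  obtain ⟨p, hp0, hp, hpd⟩ := hdist.exists_walk
  refine ⟨n, p, hp0, hp, fun i j hij => ?_, ?_, fun k hk => ?_⟩
  · have := (hpd i).unique (hij ▸ hpd j)
    omega
  · have := (hpd (Fin.last n)).1
    rwa [Fin.val_last, Nat.sub_self] at this
  · have := k.isLt
    exact (hpd k.castSucc).2 0 (by rw [Fin.val_castSucc]; omega) hk

lemma isCycleDigraph_of_isDirCycle (hsc : StronglyConnected E) {m : ℕ} (hm : 2 ≤ m)
    {c : ZMod m → V} (hc : IsDirCycle E c) (hsucc : ∀ i y, E (c i) y → y = c (i + 1)) :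
    IsCycleDigraph E := by
  have hclosed : ∀ x y, Reach E x y → x ∈ Set.range c → y ∈ Set.range c := by
    intro x y hxy hx
    induction hxy with
    | refl => exact hx
    | tail _ hyz ih =>
      obtain ⟨i, rfl⟩ := ih
      exact ⟨i + 1, (hsucc i _ hyz).symm⟩
  have hsurj : Function.Surjective c := fun y => hclosed _ y (hsc (c 0) y) ⟨0, rfl⟩
  let e := Equiv.ofBijective c ⟨hc.1, hsurj⟩
  refine ⟨m, hm, e.symm, fun x y => ?_⟩
  obtain ⟨i, rfl⟩ := hsurj x
  obtain ⟨j, rfl⟩ := hsurj y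
  change E (c i) (c j) ↔ e.symm (e j) = e.symm (e i) + 1
  simp only [Equiv.symm_apply_apply]
  exact ⟨fun h => hc.1 (hsucc i _ h), fun h => h ▸ hc.2 i⟩

lemma hasInftySubdigraph_of_isDirCycle {r s : ℕ} (hr : 2 ≤ r) (hs : 2 ≤ s)
    {c : ZMod r → V} {d : ZMod s → V} (hc : IsDirCycle E c) (hd : IsDirCycle E d)
    {i : ZMod r} {j : ZMod s} (hij : c i = d j)
    (hcap : ∀ x ∈ Set.range c, x ∈ Set.range d → x = c i) : HasInftySubdigraph E := by
  have hrange {m : ℕ} (f : ZMod m → V) (k : ZMod m) :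
      Set.range (fun a => f (a + k)) = Set.range f :=
    (add_right_surjective k).range_comp f
  refine ⟨r, s, hr, hs, _, _, (hc.rotate i).1, (hd.rotate j).1, by simpa using hij, ?_,
    (hc.rotate i).2, (hd.rotate j).2⟩
  rw [hrange, hrange, zero_add]
  refine Set.Subset.antisymm (fun x ⟨hxc, hxd⟩ => hcap x hxc hxd) ?_
  rintro x rfl
  exact ⟨⟨i, rfl⟩, ⟨j, hij.symm⟩⟩

lemma hasThetaSubdigraph_of_isDirCycle {n k : ℕ} (hn : 2 ≤ n) {c : ZMod n → V}
    (hc : IsDirCycle E c) {i : ZMod n} {q : Fin (k + 1) → V} (hiq : E (c i) (q 0))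
    (hne : q 0 ≠ c (i + 1)) (hq : IsWalk E q) (hqinj : Function.Injective q)
    (hlast : q (Fin.last k) ∈ Set.range c) (hlast_ne : q (Fin.last k) ≠ c i)
    (havoid : ∀ j : Fin k, q j.castSucc ∉ Set.range c) : HasThetaSubdigraph E := by
  have hci : c i ∉ Set.range q := by
    rintro ⟨j, hj⟩
    cases j using Fin.lastCases with
    | last => exact hlast_ne hj
    | cast j => exact havoid j ⟨i, hj.symm⟩
  refine ⟨n, k + 1, hn, by omega, c, Fin.cons (c i) q, hc.1,
    Fin.cons_injective_iff.2 ⟨hci, hqinj⟩, hc.2, hq.cons hiq, ?_, ⟨i, rfl⟩, ?_,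
    fun l hl0 hll => ?_, fun l => ?_⟩
  · simpa using hlast_ne.symm
  · simpa using hlast
  · obtain ⟨l, rfl⟩ := Fin.exists_succ_eq.2 hl0
    have hl : l ≠ Fin.last k := fun h => hll (by rw [h, Fin.succ_last])
    obtain ⟨l, rfl⟩ := Fin.exists_castSucc_eq.2 hl
    simpa using havoid l
  · rintro ⟨j, hj, hj1⟩
    cases l using Fin.cases with
    | zero =>
      obtain rfl := hc.1 hj
      exact hne (by simpa using hj1.symm)
    | succ l => exact havoid l ⟨j, by simpa [← Fin.succ_castSucc] using hj⟩

end ArcRelation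

open ArcRelation in
theorem stmt12_general {V : Type*} (E : V → V → Prop)
    (hloop : ∀ v, ¬ E v v) (hsc : StronglyConnected E)
    (hnc : ¬ IsCycleDigraph E) (harc : ∃ u v, E u v) :
    HasInftySubdigraph E ∨ HasThetaSubdigraph E := by
  obtain ⟨u, w, huw⟩ := harc
  obtain ⟨n, p, hp0, hp, hpinj, hplast, -⟩ :=
    exists_shortest_walk (T := (· = u)) ⟨u, rfl, hsc w u⟩
  have hn : 1 ≤ n := Nat.one_le_iff_ne_zero.2 fun h => by
    subst h
    have hwu : w = u := hp0.symm.trans hplast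
    exact hloop u (hwu ▸ huw)
  set c : ZMod (n + 1) → V := p
  have hc : IsDirCycle E c := hp.isDirCycle hpinj (by rwa [hp0, hplast])
  obtain ⟨i, b, hib, hb⟩ : ∃ i b, E (c i) b ∧ b ≠ c (i + 1) := by
    by_contra! h
    exact hnc (isCycleDigraph_of_isDirCycle hsc (by omega) hc h)
  obtain ⟨k, q, rfl, hq, hqinj, hqlast, hqavoid⟩ :=
    exists_shortest_walk (T := (· ∈ Set.range c)) ⟨c i, ⟨i, rfl⟩, hsc b (c i)⟩
  by_cases hqv : q (Fin.last k) = c i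
  · have hk : 1 ≤ k := Nat.one_le_iff_ne_zero.2 fun h => by
      subst h
      exact hloop _ (hqv ▸ hib)
    refine .inl (hasInftySubdigraph_of_isDirCycle (by omega) (by omega) hc
      (hq.isDirCycle hqinj (hqv ▸ hib)) (j := Fin.last k) hqv.symm ?_)
    rintro x hx ⟨j, rfl⟩
    cases j using Fin.lastCases with
    | last => exact hqv
    | cast j => exact absurd hx (hqavoid j)
  · exact .inr (hasThetaSubdigraph_of_isDirCycle (by omega) hc hib hb hq hqinj hqlast hqv hqavoid)

/-- a strongly connected (simple) digraph that is not a directed cycle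
and has at least one arc contains an `∞`-subdigraph or a `θ`-subdigraph. -/
theorem stmt12 {V : Type*} [Fintype V] (E : V → V → Prop)
    (hloop : ∀ v, ¬ E v v) (hsc : StronglyConnected E)
    (hnc : ¬ IsCycleDigraph E) (harc : ∃ u v, E u v) :
    HasInftySubdigraph E ∨ HasThetaSubdigraph E :=
  stmt12_general E hloop hsc hnc harc
end
end
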